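/- arXiv:math/0603168 — 3 statements merged into one kernel-verified Lean document; each statement's English description precedes it below -/
import Mathlib

section
/- Let F be Thompson's group with generators x₀, x₁, and let H, L be integers with H > 0, L ≠ 0, H + L > 0, and additionally H ≥ 2 whenever L < 0 (so that x₁⁻¹x₀ᴴx₁ᴸ contains a forbidden subword). Then the identity x₁⁻¹ x₀ᴴ x₁ᴸ = x₀ᴴ x₁ᴸ x₀^{-(H+L)} x₁⁻¹ x₀^{H+L} holds in F, and the right-hand side is the Guba–Sapir normal form of this element. -/
open scoped BigOperators
open scoped commutatorElement

/-- The two relators of the finite presentation of Thompson's group `F`: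
`[x₀x₁⁻¹, x₀⁻¹x₁x₀]` and `[x₀x₁⁻¹, x₀⁻²x₁x₀²]`. -/
def thompsonRels : Set (FreeGroup (Fin 2)) :=
  { ⁅FreeGroup.of (0 : Fin 2) * (FreeGroup.of (1 : Fin 2))⁻¹,
      (FreeGroup.of (0 : Fin 2))⁻¹ * FreeGroup.of (1 : Fin 2) * FreeGroup.of (0 : Fin 2)⁆,
    ⁅FreeGroup.of (0 : Fin 2) * (FreeGroup.of (1 : Fin 2))⁻¹,
      (FreeGroup.of (0 : Fin 2))⁻¹ ^ 2 * FreeGroup.of (1 : Fin 2) * FreeGroup.of (0 : Fin 2) ^ 2⁆ }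

/-- Thompson's group `F`, as a presented group. -/
abbrev ThompsonF : Type := PresentedGroup thompsonRels

/-- The generator `x₀`. -/
def x₀ : ThompsonF := PresentedGroup.of 0

/-- The generator `x₁`. -/
def x₁ : ThompsonF := PresentedGroup.of 1

/-- The canonical projection from the free group on `x₀, x₁` to Thompson's group. -/
def toF : List (Fin 2 × Bool) → ThompsonF := fun l =>
  PresentedGroup.mk thompsonRels (FreeGroup.mk l)

/-- The word representing `x_g^z` (`g = 0` or `1`), as a list of letters. -/
def powWord (g : Fin 2) (z : ℤ) : List (Fin 2 × Bool) :=
  List.replicate z.natAbs (g, decide (0 < z))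

/-- A word is reduced if it equals the reduced word of the free-group element
it represents. -/
def Reduced (l : List (Fin 2 × Bool)) : Prop :=
  (FreeGroup.mk l).toWord = l

/-- The forbidden subwords of Guba–Sapir: `x₁^{±1} x₀^i x₁` (`i > 0`) and
`x₁^{±1} x₀^{i+1} x₁⁻¹` (`i > 0`). -/
def ForbiddenWord (w : List (Fin 2 × Bool)) : Prop :=
  ∃ (s : Bool) (i : ℕ), 0 < i ∧
    (w = (1, s) :: (List.replicate i ((0 : Fin 2), true) ++ [((1 : Fin 2), true)]) ∨
     w = (1, s) :: (List.replicate (i + 1) ((0 : Fin 2), true) ++ [((1 : Fin 2), false)]))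

/-- A word is a (Guba–Sapir) normal form if it is reduced and contains no
forbidden subword. -/
def IsNormalForm (l : List (Fin 2 × Bool)) : Prop :=
  Reduced l ∧ ∀ w, w <:+: l → ¬ ForbiddenWord w

/-- `w` is the element of `F` whose normal form begins with the prefix `pre`. -/
def NFBeginsWith (w : ThompsonF) (pre : List (Fin 2 × Bool)) : Prop :=
  ∃ l, IsNormalForm l ∧ toF l = w ∧ pre <+: l

/-- `F₁ = {x₀^k : k ≥ 0}`. -/
def SetF₁ : Set ThompsonF := {w | ∃ k : ℕ, w = x₀ ^ k}

/-- `F₂`: normal form begins with `x₀^k x₁^l`, `k > 0`, `l ≠ 0`. -/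
def SetF₂ : Set ThompsonF :=
  {w | ∃ (k l : ℤ), 0 < k ∧ l ≠ 0 ∧ NFBeginsWith w (powWord 0 k ++ powWord 1 l)}

/-- `F₃`: normal form begins with `x₀^{-k} x₁^l`, `k > 0`, `l ∈ ℤ`. -/
def SetF₃ : Set ThompsonF :=
  {w | ∃ (k l : ℤ), 0 < k ∧ NFBeginsWith w (powWord 0 (-k) ++ powWord 1 l)}

/-- `F₄`: normal form begins with `x₁^k`, `k > 0`. -/
def SetF₄ : Set ThompsonF :=
  {w | ∃ k : ℤ, 0 < k ∧ NFBeginsWith w (powWord 1 k)}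

/-- `F₅`: normal form begins with `x₁^{-k}`, `k > 0`. -/
def SetF₅ : Set ThompsonF :=
  {w | ∃ k : ℤ, 0 < k ∧ NFBeginsWith w (powWord 1 (-k))}

/-!
Write `x_{n+1} = x₀^{-n} x₁ x₀^n`. The two relators say that `x₁` conjugates `x₂` and `x₃` as
`x₀` does; conjugating by `x₀` shifts all indices, and an induction gives
`x₁⁻¹ x_n x₁ = x_{n+1}` for every `n ≥ 2`. Hence `x₁^{-L} x_{H+1} x₁^L = x_{H+L+1}` whenever
`H, H + L > 0`, which rearranges to the identity. The word on the right is freely reduced, and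
its only letter `x₁^{±1}` followed by `x₀` is the last `x₁⁻¹`, after which only `x₀`'s occur; since
a forbidden subword begins with `x₁^{±1} x₀` and ends with `x₁^{±1}`, there is none.
-/

open List

/-- `xConj n` is the generator `x_{n+1}` of the infinite presentation of `F`. -/
def xConj (n : ℤ) : ThompsonF := x₀ ^ (-n) * x₁ * x₀ ^ n

lemma xConj_zero : xConj 0 = x₁ := by simp [xConj]

lemma xConj_add (n j : ℤ) : xConj (n + j) = x₀ ^ (-j) * xConj n * x₀ ^ j := by
  simp only [xConj, neg_add, zpow_add]
  group

lemma commute_x₀_mul_x₁_inv_xConj_one : Commute (x₀ * x₁⁻¹) (xConj 1) := by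
  have h : ⁅x₀ * x₁⁻¹, x₀⁻¹ * x₁ * x₀⁆ = 1 := PresentedGroup.one_of_mem (Set.mem_insert _ _)
  simpa [xConj, commutatorElement_eq_one_iff_commute] using h

lemma commute_x₀_mul_x₁_inv_xConj_two : Commute (x₀ * x₁⁻¹) (xConj 2) := by
  have h : ⁅x₀ * x₁⁻¹, x₀⁻¹ ^ 2 * x₁ * x₀ ^ 2⁆ = 1 :=
    PresentedGroup.one_of_mem (Set.mem_insert_of_mem _ rfl)
  simpa [xConj, commutatorElement_eq_one_iff_commute] using h

lemma x₁_conj_eq_x₀_conj {a : ThompsonF} (h : Commute (x₀ * x₁⁻¹) a) :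
    x₁⁻¹ * a * x₁ = x₀⁻¹ * a * x₀ := by
  have h' : x₀ * x₁⁻¹ * a = a * (x₀ * x₁⁻¹) := h.eq
  calc x₁⁻¹ * a * x₁ = x₀⁻¹ * (x₀ * x₁⁻¹ * a) * x₁ := by group
    _ = x₀⁻¹ * a * x₀ := by rw [h']; group

lemma x₀_conj_xConj (n : ℤ) : x₀⁻¹ * xConj n * x₀ = xConj (n + 1) := by
  rw [xConj_add, zpow_neg, zpow_one]

lemma conj_xConj_of_x₁_conj {d : ℤ} (h : x₁⁻¹ * xConj d * x₁ = xConj (d + 1)) (j : ℤ) :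
    (xConj j)⁻¹ * xConj (d + j) * xConj j = xConj (d + j + 1) := by
  have hj : xConj j = x₀ ^ (-j) * x₁ * x₀ ^ j := by rw [← xConj_zero, ← xConj_add, zero_add]
  rw [hj, xConj_add, add_right_comm, xConj_add (d + 1), ← h]
  group

lemma x₁_conj_xConj_natCast : ∀ n : ℕ, x₁⁻¹ * xConj (n + 1) * x₁ = xConj (n + 2)
  | 0 => by
    simpa [x₀_conj_xConj, one_add_one_eq_two] using
      x₁_conj_eq_x₀_conj commute_x₀_mul_x₁_inv_xConj_one
  | 1 => by
    simpa [x₀_conj_xConj, show (1 : ℤ) + 1 + 1 = 1 + 2 by norm_num] using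
      x₁_conj_eq_x₀_conj commute_x₀_mul_x₁_inv_xConj_two
  | m + 2 => by
    have ih₀ := x₁_conj_xConj_natCast m
    have h₀ : x₁⁻¹ * xConj 1 * x₁ = xConj 2 := by simpa using x₁_conj_xConj_natCast 0
    have ih₁ := x₁_conj_xConj_natCast (m + 1)
    have h₁ := conj_xConj_of_x₁_conj ih₀ 1
    have h₂ := conj_xConj_of_x₁_conj ih₀ 2
    push_cast at ih₁ ⊢
    rw [show (m : ℤ) + 1 + 1 = m + 2 by ring] at h₁ ih₁
    rw [show (m : ℤ) + 1 + 2 = m + 2 + 1 by ring] at h₂ ih₁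
    calc x₁⁻¹ * xConj (m + 2 + 1) * x₁
        = x₁⁻¹ * ((xConj 1)⁻¹ * xConj (m + 2) * xConj 1) * x₁ := by rw [h₁]
      _ = (x₁⁻¹ * xConj 1 * x₁)⁻¹ * (x₁⁻¹ * xConj (m + 2) * x₁) * (x₁⁻¹ * xConj 1 * x₁) := by
        group
      _ = (xConj 2)⁻¹ * xConj (m + 2 + 1) * xConj 2 := by rw [h₀, ih₁]
      _ = xConj (m + 2 + 2) := by rw [h₂]; ring_nf

lemma x₁_conj_xConj {n : ℤ} (hn : 0 < n) : x₁⁻¹ * xConj n * x₁ = xConj (n + 1) := by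
  lift n - 1 to ℕ using by omega with m hm
  simpa [show n = m + 1 by omega, add_assoc, one_add_one_eq_two] using x₁_conj_xConj_natCast m

lemma x₁_pow_conj_xConj {n : ℤ} (hn : 0 < n) (j : ℕ) :
    (x₁ ^ j)⁻¹ * xConj n * x₁ ^ j = xConj (n + j) := by
  induction j with
  | zero => simp
  | succ j ih =>
    calc (x₁ ^ (j + 1))⁻¹ * xConj n * x₁ ^ (j + 1)
        = x₁⁻¹ * ((x₁ ^ j)⁻¹ * xConj n * x₁ ^ j) * x₁ := by group
      _ = xConj (n + (j + 1 : ℕ)) := by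
        rw [ih, x₁_conj_xConj (by omega)]
        push_cast
        ring_nf

lemma x₁_zpow_conj_xConj {n k : ℤ} (hn : 0 < n) (hnk : 0 < n + k) :
    x₁ ^ (-k) * xConj n * x₁ ^ k = xConj (n + k) := by
  obtain ⟨j, rfl | rfl⟩ := Int.eq_nat_or_neg k
  · simpa using x₁_pow_conj_xConj hn j
  · have h := x₁_pow_conj_xConj hnk j
    rw [neg_add_cancel_right] at h
    rw [neg_neg, zpow_neg, zpow_natCast, ← h]
    group

lemma x₁_inv_mul_x₀_zpow_mul_x₁_zpow {H L : ℤ} (hH : 0 < H) (hHL : 0 < H + L) :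
    x₁⁻¹ * x₀ ^ H * x₁ ^ L = x₀ ^ H * x₁ ^ L * x₀ ^ (-(H + L)) * x₁⁻¹ * x₀ ^ (H + L) := by
  calc x₁⁻¹ * x₀ ^ H * x₁ ^ L = x₀ ^ H * x₁ ^ L * (x₁ ^ (-L) * xConj H * x₁ ^ L)⁻¹ := by
        simp only [xConj]; group
    _ = x₀ ^ H * x₁ ^ L * x₀ ^ (-(H + L)) * x₁⁻¹ * x₀ ^ (H + L) := by
        rw [x₁_zpow_conj_xConj hH hHL, xConj]; group

lemma mk_replicate_true (g : Fin 2) (n : ℕ) :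
    FreeGroup.mk (replicate n (g, true)) = FreeGroup.of g ^ n := by
  rw [← flatten_replicate_singleton, ← FreeGroup.pow_mk]
  rfl

lemma mk_replicate_false (g : Fin 2) (n : ℕ) :
    FreeGroup.mk (replicate n (g, false)) = (FreeGroup.of g ^ n)⁻¹ := by
  rw [← mk_replicate_true, FreeGroup.inv_mk]
  simp [FreeGroup.invRev]

lemma mk_powWord (g : Fin 2) (z : ℤ) : FreeGroup.mk (powWord g z) = FreeGroup.of g ^ z := by
  obtain ⟨n, rfl | rfl⟩ := Int.eq_nat_or_neg z
  · rcases n.eq_zero_or_pos with rfl | hn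
    · rfl
    · simp [powWord, hn, mk_replicate_true]
  · simp [powWord, mk_replicate_false, show ¬ (n : ℤ) < 0 by omega]

lemma toF_append (l₁ l₂ : List (Fin 2 × Bool)) : toF (l₁ ++ l₂) = toF l₁ * toF l₂ := by
  simp only [toF, ← FreeGroup.mul_mk, map_mul]

lemma toF_powWord (g : Fin 2) (z : ℤ) : toF (powWord g z) = PresentedGroup.of g ^ z := by
  simp only [toF, mk_powWord, map_zpow]
  rfl

lemma powWord_of_pos (g : Fin 2) {z : ℤ} (hz : 0 < z) :
    powWord g z = replicate z.toNat (g, true) := by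
  rw [powWord, decide_eq_true hz, show z.natAbs = z.toNat by omega]

lemma powWord_neg_of_pos (g : Fin 2) {z : ℤ} (hz : 0 < z) :
    powWord g (-z) = replicate z.toNat (g, false) := by
  rw [powWord, decide_eq_false (by omega), show (-z).natAbs = z.toNat by omega]

lemma reduced_iff_isReduced (l : List (Fin 2 × Bool)) : Reduced l ↔ FreeGroup.IsReduced l := by
  rw [Reduced, FreeGroup.toWord_mk, FreeGroup.isReduced_iff_reduce_eq]

/-- A forbidden word begins with such a pair `x₁^{±1} x₀`. -/
def StartsX₁X₀ (x y : Fin 2 × Bool) : Prop := x.1 = 1 ∧ y = (0, true)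

lemma ForbiddenWord.not_isChain {w : List (Fin 2 × Bool)} (hw : ForbiddenWord w) :
    ¬ w.IsChain fun x y => ¬ StartsX₁X₀ x y := by
  obtain ⟨s, i, hi, rfl | rfl⟩ := hw <;>
  · obtain ⟨i, rfl⟩ := Nat.exists_eq_add_of_lt hi
    simp [replicate_succ, StartsX₁X₀]

lemma ForbiddenWord.getLast? {w : List (Fin 2 × Bool)} (hw : ForbiddenWord w) :
    ∃ t, w.getLast? = some (1, t) := by
  obtain ⟨s, i, -, rfl | rfl⟩ := hw
  · exact ⟨true, by rw [← cons_append, getLast?_concat]⟩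
  · exact ⟨false, by rw [← cons_append, getLast?_concat]⟩

lemma infix_of_infix_append_replicate {α : Type*} {w l : List α} {c : α} {m : ℕ}
    (hw : w <:+: l ++ replicate m c) (hc : w.getLast? ≠ some c) : w <:+: l := by
  induction m with
  | zero => simpa using hw
  | succ m ih =>
    rw [replicate_succ', ← append_assoc, infix_concat_iff] at hw
    rcases hw with ⟨u, hu⟩ | hw
    · rcases eq_or_ne w [] with rfl | hne
      · exact nil_infix
      · have := congrArg getLast? hu
        rw [getLast?_append_of_ne_nil _ hne, getLast?_concat] at this
        exact absurd this hc
    · exact ih hw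

lemma isNormalForm_replicate (h a m : ℕ) (s : Bool) (ha : a ≠ 0) (hm : m ≠ 0) :
    IsNormalForm (replicate h ((0 : Fin 2), true) ++ replicate a ((1 : Fin 2), s) ++
      replicate m ((0 : Fin 2), false) ++ [((1 : Fin 2), false)] ++
      replicate m ((0 : Fin 2), true)) := by
  constructor
  · rw [reduced_iff_isReduced, FreeGroup.IsReduced]
    simp [isChain_append, isChain_cons, isChain_replicate_of_rel, getLast?_replicate,
      head?_replicate, ha, hm]
  · intro w hw hf
    have hchain : (replicate h ((0 : Fin 2), true) ++ replicate a ((1 : Fin 2), s) ++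
        replicate m ((0 : Fin 2), false) ++ [((1 : Fin 2), false)]).IsChain
          fun x y => ¬ StartsX₁X₀ x y := by
      simp [StartsX₁X₀, isChain_append, isChain_replicate_of_rel, getLast?_replicate,
        head?_replicate, ha, hm]
    obtain ⟨t, ht⟩ := hf.getLast?
    exact hf.not_isChain (hchain.infix (infix_of_infix_append_replicate hw (by simp [ht])))

theorem statement8_general (H L : ℤ) (hH : 0 < H) (hL : L ≠ 0) (hHL : 0 < H + L) :
    x₁⁻¹ * x₀ ^ H * x₁ ^ L =
      x₀ ^ H * x₁ ^ L * x₀ ^ (-(H + L)) * x₁⁻¹ * x₀ ^ (H + L) ∧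
    IsNormalForm
      (powWord 0 H ++ powWord 1 L ++ powWord 0 (-(H + L)) ++ powWord 1 (-1) ++
        powWord 0 (H + L)) ∧
    toF (powWord 0 H ++ powWord 1 L ++ powWord 0 (-(H + L)) ++ powWord 1 (-1) ++
        powWord 0 (H + L)) =
      x₁⁻¹ * x₀ ^ H * x₁ ^ L := by
  have hid := x₁_inv_mul_x₀_zpow_mul_x₁_zpow hH hHL
  refine ⟨hid, ?_, ?_⟩
  · rw [powWord_of_pos 0 hH, powWord_neg_of_pos 0 hHL, powWord_of_pos 0 hHL]
    exact isNormalForm_replicate _ _ _ _ (Int.natAbs_ne_zero.mpr hL) (by omega)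
  · rw [hid]
    simp only [toF_append, toF_powWord, zpow_neg_one]
    rfl

/-- formula (5). If `H > 0`, `L ≠ 0`, `H + L > 0` (and `H ≥ 2` if `L < 0`),
then `x₁⁻¹x₀ᴴx₁ᴸ = x₀ᴴx₁ᴸx₀^{-(H+L)}x₁⁻¹x₀^{H+L}` in `F`, and the right-hand side is
the Guba–Sapir normal form of this element. -/
theorem statement8 (H L : ℤ) (hH : 0 < H) (hL : L ≠ 0) (hHL : 0 < H + L)
    (hneg : L < 0 → 2 ≤ H) :
    x₁⁻¹ * x₀ ^ H * x₁ ^ L =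
      x₀ ^ H * x₁ ^ L * x₀ ^ (-(H + L)) * x₁⁻¹ * x₀ ^ (H + L) ∧
    IsNormalForm
      (powWord 0 H ++ powWord 1 L ++ powWord 0 (-(H + L)) ++ powWord 1 (-1) ++
        powWord 0 (H + L)) ∧
    toF (powWord 0 H ++ powWord 1 L ++ powWord 0 (-(H + L)) ++ powWord 1 (-1) ++
        powWord 0 (H + L)) =
      x₁⁻¹ * x₀ ^ H * x₁ ^ L :=
  statement8_general H L hH hL hHL
end

section
/- Let F be Thompson's group with generators x₀, x₁, and let H, L be integers with H ≥ 2, L ≠ 0, and H + L ≤ 0 (so that x₁⁻¹x₀ᴴx₁ᴸ contains a forbidden subword). Then the identity x₁⁻¹ x₀ᴴ x₁ᴸ = x₀ᴴ x₁^{-H+1} x₀⁻¹ x₁⁻¹ x₀ x₁^{H+L-1} holds in F, and the right-hand side is the Guba–Sapir normal form of this element. -/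
open scoped BigOperators
open scoped commutatorElement

/-!
Write `xₙ₊₁ = x₀⁻ⁿ x₁ x₀ⁿ`. The two relators say that `c = x₀x₁⁻¹` commutes
with `x₂` and `x₃`, and `c` commutes with `xₖ` exactly when `x₁⁻¹ xₖ x₁ = xₖ₊₁`. Conjugating the
latter by `x₀` gives `x₂⁻¹ xₖ₊₁ x₂ = xₖ₊₂`, so `c` commutes with every `xₖ`, `k ≥ 2`, by a
two-step induction. Hence `xₙ₊₁ = x₁⁻⁽ⁿ⁻¹⁾ x₂ x₁ⁿ⁻¹`, and the identity
follows from `x₁⁻¹ x₀ᴴ = x₀ᴴ (x_{H+1})⁻¹`.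

The right-hand side word is freely reduced, contains no positive letter `x₁`,
and its only occurrences of `x₀²` lie in the leading block `x₀ᴴ`,
which no letter precedes; so it has no forbidden subword.
-/

open List

lemma List.Sublist.of_cons_sublist_replicate_append {α : Type*} {x y : α} {t l : List α}
    (hxy : x ≠ y) : ∀ {n : ℕ}, x :: t <+ replicate n y ++ l → x :: t <+ l
  | 0, h => h
  | n + 1, h => by
    rw [replicate_succ, cons_append, sublist_cons_iff] at h
    rcases h with h | ⟨r, hr, -⟩
    · exact of_cons_sublist_replicate_append hxy h
    · exact absurd (cons.inj hr).1 hxy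

namespace ThompsonF

/-- `xGen n` is the generator `x_{n+1}` of the infinite presentation of `F`. -/
def xGen (n : ℕ) : ThompsonF := (x₀ ^ n)⁻¹ * x₁ * x₀ ^ n

lemma xGen_zero : xGen 0 = x₁ := by simp [xGen]

lemma xGen_succ (n : ℕ) : xGen (n + 1) = x₀⁻¹ * xGen n * x₀ := by
  simp only [xGen, pow_succ]
  group

lemma commute_xGen_one : Commute (x₀ * x₁⁻¹) (xGen 1) := by
  have h := PresentedGroup.one_of_mem (rels := thompsonRels) (Set.mem_insert _ _)
  rw [map_commutatorElement, commutatorElement_eq_one_iff_commute] at h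
  simpa [xGen, mul_assoc, x₀, x₁, PresentedGroup.of] using h

lemma commute_xGen_two : Commute (x₀ * x₁⁻¹) (xGen 2) := by
  have h := PresentedGroup.one_of_mem (rels := thompsonRels) (Set.mem_insert_of_mem _ rfl)
  rw [map_commutatorElement, commutatorElement_eq_one_iff_commute] at h
  simpa [xGen, mul_assoc, x₀, x₁, PresentedGroup.of] using h

lemma x₁_conj_xGen {n : ℕ} (h : Commute (x₀ * x₁⁻¹) (xGen n)) :
    x₁⁻¹ * xGen n * x₁ = xGen (n + 1) := by
  rw [xGen_succ]
  calc x₁⁻¹ * xGen n * x₁ = x₀⁻¹ * (x₀ * x₁⁻¹ * xGen n) * x₁ := by group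
    _ = x₀⁻¹ * (xGen n * (x₀ * x₁⁻¹)) * x₁ := by rw [h.eq]
    _ = x₀⁻¹ * xGen n * x₀ := by group

lemma xGen_one_conj_xGen {n : ℕ} (h : Commute (x₀ * x₁⁻¹) (xGen n)) :
    (xGen 1)⁻¹ * xGen (n + 1) * xGen 1 = xGen (n + 2) := by
  calc (xGen 1)⁻¹ * xGen (n + 1) * xGen 1 = x₀⁻¹ * (x₁⁻¹ * xGen n * x₁) * x₀ := by
        rw [xGen_succ n, xGen_succ 0, xGen_zero]
        group
    _ = xGen (n + 2) := by rw [x₁_conj_xGen h, xGen_succ (n + 1)]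

lemma commute_xGen_succ : ∀ n : ℕ, Commute (x₀ * x₁⁻¹) (xGen (n + 1))
  | 0 => commute_xGen_one
  | 1 => commute_xGen_two
  | n + 2 => by
    rw [← xGen_one_conj_xGen (commute_xGen_succ n)]
    exact (commute_xGen_one.inv_right.mul_right (commute_xGen_succ (n + 1))).mul_right
      commute_xGen_one

lemma xGen_succ_eq_conj (n : ℕ) : xGen (n + 1) = (x₁ ^ n)⁻¹ * xGen 1 * x₁ ^ n := by
  induction n with
  | zero => simp
  | succ n ih =>
    rw [← x₁_conj_xGen (commute_xGen_succ n), ih, pow_succ']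
    group

lemma x₁_inv_mul_x₀_pow (n : ℕ) :
    x₁⁻¹ * x₀ ^ (n + 1) = x₀ ^ (n + 1) * (x₁ ^ n)⁻¹ * x₀⁻¹ * x₁⁻¹ * x₀ * x₁ ^ n := by
  calc x₁⁻¹ * x₀ ^ (n + 1) = x₀ ^ (n + 1) * (xGen (n + 1))⁻¹ := by rw [xGen]; group
    _ = _ := by rw [xGen_succ_eq_conj, xGen_succ 0, xGen_zero]; group

lemma x₁_inv_mul_x₀_zpow_mul_x₁_zpow {H : ℤ} (hH : 1 ≤ H) (L : ℤ) :
    x₁⁻¹ * x₀ ^ H * x₁ ^ L =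
      x₀ ^ H * x₁ ^ (-H + 1) * x₀⁻¹ * x₁⁻¹ * x₀ * x₁ ^ (H + L - 1) := by
  obtain ⟨n, rfl⟩ : ∃ n : ℕ, H = n + 1 := ⟨(H - 1).toNat, by omega⟩
  have hx₀ : x₀ ^ ((n : ℤ) + 1) = x₀ ^ (n + 1) := by norm_cast
  rw [hx₀, show -((n : ℤ) + 1) + 1 = -n by ring, show (n : ℤ) + 1 + L - 1 = n + L by ring,
    zpow_add, zpow_neg, zpow_natCast, x₁_inv_mul_x₀_pow]
  group

lemma toF_append (l₁ l₂ : List (Fin 2 × Bool)) : toF (l₁ ++ l₂) = toF l₁ * toF l₂ := by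
  simp only [toF, ← FreeGroup.mul_mk, map_mul]

lemma powWord_natCast (g : Fin 2) (n : ℕ) : powWord g n = replicate n (g, true) := by
  rw [powWord, Int.natAbs_natCast]
  cases n <;> simp

lemma powWord_neg_natCast (g : Fin 2) (n : ℕ) : powWord g (-n) = replicate n (g, false) := by
  rw [powWord, Int.natAbs_neg, Int.natAbs_natCast]
  cases n <;> simp

lemma toF_powWord (g : Fin 2) (z : ℤ) : toF (powWord g z) = PresentedGroup.of g ^ z := by
  have hof : FreeGroup.of g = FreeGroup.mk [(g, true)] := rfl
  have hinv : (FreeGroup.of g)⁻¹ = FreeGroup.mk [(g, false)] := by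
    rw [hof, FreeGroup.inv_mk]; rfl
  rcases Int.eq_nat_or_neg z with ⟨n, rfl | rfl⟩
  · rw [powWord_natCast, zpow_natCast, PresentedGroup.of, ← map_pow, hof, FreeGroup.pow_mk,
      flatten_replicate_singleton]
    rfl
  · rw [powWord_neg_natCast, zpow_neg, zpow_natCast, PresentedGroup.of, ← map_pow, ← map_inv,
      ← inv_pow, hinv, FreeGroup.pow_mk, flatten_replicate_singleton]
    rfl

lemma reduced_iff_isReduced (l : List (Fin 2 × Bool)) : Reduced l ↔ FreeGroup.IsReduced l := by
  rw [Reduced, FreeGroup.toWord_mk, FreeGroup.isReduced_iff_reduce_eq]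

lemma not_forbiddenWord_of_infix (a m c : ℕ) {w : List (Fin 2 × Bool)}
    (hw : w <:+: replicate a ((0 : Fin 2), true) ++ replicate (m + 1) ((1 : Fin 2), false) ++
      [(0, false)] ++ [(1, false)] ++ [(0, true)] ++ replicate c (1, false)) :
    ¬ ForbiddenWord w := by
  simp only [append_assoc, singleton_append] at hw
  rintro ⟨s, i, hi, rfl | rfl⟩
  · have hmem := hw.subset (a := ((1 : Fin 2), true)) (by simp)
    simp at hmem
  · obtain ⟨j, rfl⟩ : ∃ j, i = j + 1 := ⟨i - 1, by omega⟩
    have hsub : [((1 : Fin 2), s), (0, true), (0, true)] <+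
        replicate (m + 1) ((1 : Fin 2), false) ++
          (0, false) :: (1, false) :: (0, true) :: replicate c (1, false) := by
      refine Sublist.of_cons_sublist_replicate_append (by simp) (Sublist.trans ?_ hw.sublist)
      simp [replicate_succ]
    have := hsub.count_le ((0 : Fin 2), true)
    simp [count_replicate] at this

lemma isNormalForm_word (a m c : ℕ) :
    IsNormalForm (replicate a ((0 : Fin 2), true) ++ replicate (m + 1) ((1 : Fin 2), false) ++
      [(0, false)] ++ [(1, false)] ++ [(0, true)] ++ replicate c (1, false)) := by
  refine ⟨(reduced_iff_isReduced _).2 ?_, fun w hw => not_forbiddenWord_of_infix a m c hw⟩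
  simp [FreeGroup.IsReduced, isChain_append, isChain_cons, isChain_replicate_of_rel,
    getLast?_replicate, head?_replicate]

end ThompsonF

theorem statement9_general (H L : ℤ) (hH : 2 ≤ H) (hHL : H + L ≤ 0) :
    x₁⁻¹ * x₀ ^ H * x₁ ^ L =
      x₀ ^ H * x₁ ^ (-H + 1) * x₀⁻¹ * x₁⁻¹ * x₀ * x₁ ^ (H + L - 1) ∧
    IsNormalForm
      (powWord 0 H ++ powWord 1 (-H + 1) ++ powWord 0 (-1) ++ powWord 1 (-1) ++
        powWord 0 1 ++ powWord 1 (H + L - 1)) ∧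
    toF (powWord 0 H ++ powWord 1 (-H + 1) ++ powWord 0 (-1) ++ powWord 1 (-1) ++
        powWord 0 1 ++ powWord 1 (H + L - 1)) =
      x₁⁻¹ * x₀ ^ H * x₁ ^ L := by
  have hid := ThompsonF.x₁_inv_mul_x₀_zpow_mul_x₁_zpow (by omega : 1 ≤ H) L
  obtain ⟨a, ha⟩ : ∃ a : ℕ, H = a := ⟨H.toNat, by omega⟩
  obtain ⟨m, hm⟩ : ∃ m : ℕ, -H + 1 = -((m + 1 : ℕ) : ℤ) := ⟨(H - 2).toNat, by omega⟩
  obtain ⟨c, hc⟩ : ∃ c : ℕ, H + L - 1 = -(c : ℤ) := ⟨(1 - H - L).toNat, by omega⟩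
  have hword := ThompsonF.isNormalForm_word a m c
  rw [← ThompsonF.powWord_natCast, ← ThompsonF.powWord_neg_natCast,
    ← ThompsonF.powWord_neg_natCast, ← ha, ← hm, ← hc] at hword
  refine ⟨hid, hword, ?_⟩
  simp only [ThompsonF.toF_append, ThompsonF.toF_powWord, hid, zpow_neg_one, zpow_one]
  rfl

/-- formula (6). If `H ≥ 2`, `L ≠ 0`, `H + L ≤ 0`, then
`x₁⁻¹x₀ᴴx₁ᴸ = x₀ᴴx₁^{-H+1}x₀⁻¹x₁⁻¹x₀x₁^{H+L-1}` in `F`, and the right-hand side is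
the Guba–Sapir normal form of this element. -/
theorem statement9 (H L : ℤ) (hH : 2 ≤ H) (hL : L ≠ 0) (hHL : H + L ≤ 0) :
    x₁⁻¹ * x₀ ^ H * x₁ ^ L =
      x₀ ^ H * x₁ ^ (-H + 1) * x₀⁻¹ * x₁⁻¹ * x₀ * x₁ ^ (H + L - 1) ∧
    IsNormalForm
      (powWord 0 H ++ powWord 1 (-H + 1) ++ powWord 0 (-1) ++ powWord 1 (-1) ++
        powWord 0 1 ++ powWord 1 (H + L - 1)) ∧
    toF (powWord 0 H ++ powWord 1 (-H + 1) ++ powWord 0 (-1) ++ powWord 1 (-1) ++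
        powWord 0 1 ++ powWord 1 (H + L - 1)) =
      x₁⁻¹ * x₀ ^ H * x₁ ^ L :=
  statement9_general H L hH hHL
end

section
/- Let F be Thompson's group with generators x₀, x₁. The map ℤ × ℤ → F given by (a, b) ↦ x₀^a x₁ x₀^b is injective; in particular, if x₀ⁱ x₁ x₀^h = x₀ʲ x₁ x₀^{h'} in F for integers i, j, h, h', then i = j and h = h'. -/
open scoped BigOperators
open scoped commutatorElement

/-!
`F` acts on `ℝ` by piecewise-linear homeomorphisms, with `x₀` the translation `t ↦ t - 1` and
`x₁` a map `bend` whose fixed points are exactly `(-∞, 0]`; so `x₀ᵃ x₁ x₀ᵇ` acts by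
`t ↦ bend (t - b) - a`. If this equals `t ↦ bend (t - b') - a'`, comparing far to the left gives
`a + b = a' + b'`, and evaluating at `b'` then shows that `b' - b` is a fixed point of `bend`,
so `b' ≤ b`; by symmetry `b = b'`.
-/

section FixedPoints

variable {α : Type*} [AddCommGroup α] [LinearOrder α] [IsOrderedAddMonoid α] {f : α → α}

theorem add_eq_add_of_sub_comp_sub_eq (hf : ∀ t ≤ 0, f t = t) {i j h h' : α}
    (H : ∀ t, f (t - h) - i = f (t - h') - j) : h + i = h' + j := by
  have := H (min h h')
  rwa [hf _ (sub_nonpos.2 (min_le_left h h')), hf _ (sub_nonpos.2 (min_le_right h h')),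
    sub_sub, sub_sub, sub_right_inj] at this

theorem le_of_sub_comp_sub_eq (hf : ∀ t, f t = t ↔ t ≤ 0) {i j h h' : α}
    (H : ∀ t, f (t - h) - i = f (t - h') - j) : h' ≤ h := by
  have hsum := add_eq_add_of_sub_comp_sub_eq (fun t => (hf t).2) H
  have := H h'
  rw [sub_self, (hf 0).2 le_rfl] at this
  have hfixed : f (h' - h) = h' - h := by grind
  exact sub_nonpos.1 ((hf _).1 hfixed)

theorem eq_and_eq_of_sub_comp_sub_eq (hf : ∀ t, f t = t ↔ t ≤ 0) {i j h h' : α}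
    (H : ∀ t, f (t - h) - i = f (t - h') - j) : i = j ∧ h = h' := by
  have hh : h = h' :=
    le_antisymm (le_of_sub_comp_sub_eq hf fun t => (H t).symm) (le_of_sub_comp_sub_eq hf H)
  subst hh
  exact ⟨add_left_cancel (add_eq_add_of_sub_comp_sub_eq (fun t => (hf t).2) H), rfl⟩

end FixedPoints

namespace ThompsonF

noncomputable def bend : Equiv.Perm ℝ where
  toFun t := if t ≤ 0 then t else if t ≤ 2 then t / 2 else t - 1
  invFun t := if t ≤ 0 then t else if t ≤ 1 then 2 * t else t + 1
  left_inv t := by dsimp only; split_ifs <;> linarith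
  right_inv t := by dsimp only; split_ifs <;> linarith

theorem bend_apply (t : ℝ) :
    bend t = if t ≤ 0 then t else if t ≤ 2 then t / 2 else t - 1 := rfl

theorem bend_inv_apply (t : ℝ) :
    bend⁻¹ t = if t ≤ 0 then t else if t ≤ 1 then 2 * t else t + 1 := rfl

theorem bend_apply_eq_self_iff (t : ℝ) : bend t = t ↔ t ≤ 0 := by
  rw [bend_apply]
  split_ifs <;> constructor <;> intro <;> linarith

noncomputable def shift : Equiv.Perm ℝ := Equiv.addRight (-1)

theorem shift_apply (t : ℝ) : shift t = t - 1 := by simp [shift, sub_eq_add_neg]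

theorem shift_inv_apply (t : ℝ) : shift⁻¹ t = t + 1 := by
  rw [Equiv.Perm.inv_eq_iff_eq, shift_apply, add_sub_cancel_right]

theorem shift_zpow_apply (n : ℤ) (t : ℝ) : (shift ^ n) t = t - n := by
  simp [shift, sub_eq_add_neg]

theorem shift_bend_commute_1 : Commute (shift * bend⁻¹) (shift⁻¹ * bend * shift) := by
  ext t
  simp only [Equiv.Perm.mul_apply, shift_apply, shift_inv_apply, bend_apply, bend_inv_apply]
  split_ifs <;> linarith

theorem shift_bend_commute_2 : Commute (shift * bend⁻¹) (shift⁻¹ ^ 2 * bend * shift ^ 2) := by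
  ext t
  simp only [pow_two, Equiv.Perm.mul_apply, shift_apply, shift_inv_apply, bend_apply,
    bend_inv_apply]
  split_ifs <;> linarith

theorem lift_shift_bend_rels :
    ∀ r ∈ thompsonRels, FreeGroup.lift ![shift, bend] r = 1 := by
  simp only [thompsonRels, Set.mem_insert_iff, Set.mem_singleton_iff, forall_eq_or_imp,
    forall_eq, map_commutatorElement, commutatorElement_eq_one_iff_mul_comm, map_mul, map_inv,
    map_pow, FreeGroup.lift_apply_of, Matrix.cons_val_zero, Matrix.cons_val_one]
  exact ⟨shift_bend_commute_1, shift_bend_commute_2⟩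

noncomputable def plAction : ThompsonF →* Equiv.Perm ℝ :=
  PresentedGroup.toGroup lift_shift_bend_rels

theorem plAction_x₀ : plAction x₀ = shift := PresentedGroup.toGroup.of lift_shift_bend_rels

theorem plAction_x₁ : plAction x₁ = bend := PresentedGroup.toGroup.of lift_shift_bend_rels

theorem plAction_x₀_zpow_mul_x₁_mul_x₀_zpow_apply (a b : ℤ) (t : ℝ) :
    plAction (x₀ ^ a * x₁ * x₀ ^ b) t = bend (t - b) - a := by
  simp only [map_mul, map_zpow, plAction_x₀, plAction_x₁, Equiv.Perm.mul_apply,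
    shift_zpow_apply]

theorem x₀_zpow_mul_x₁_mul_x₀_zpow_injective :
    Function.Injective (fun p : ℤ × ℤ => x₀ ^ p.1 * x₁ * x₀ ^ p.2) := by
  intro p q hpq
  have H (t : ℝ) : bend (t - p.2) - p.1 = bend (t - q.2) - q.1 := by
    simpa only [plAction_x₀_zpow_mul_x₁_mul_x₀_zpow_apply] using
      DFunLike.congr_fun (congrArg plAction hpq) t
  obtain ⟨h₁, h₂⟩ := eq_and_eq_of_sub_comp_sub_eq bend_apply_eq_self_iff H
  exact Prod.ext (mod_cast h₁) (mod_cast h₂)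

end ThompsonF

/-- the map `(a, b) ↦ x₀^a x₁ x₀^b` from `ℤ × ℤ` to `F` is injective;
in particular `x₀ⁱx₁x₀ʰ = x₀ʲx₁x₀^{h'}` forces `i = j` and `h = h'`. -/
theorem statement14 :
    Function.Injective (fun p : ℤ × ℤ => x₀ ^ p.1 * x₁ * x₀ ^ p.2) ∧
    ∀ i j h h' : ℤ, x₀ ^ i * x₁ * x₀ ^ h = x₀ ^ j * x₁ * x₀ ^ h' → i = j ∧ h = h' :=
  ⟨ThompsonF.x₀_zpow_mul_x₁_mul_x₀_zpow_injective, fun i j h h' heq =>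
    Prod.ext_iff.1 (@ThompsonF.x₀_zpow_mul_x₁_mul_x₀_zpow_injective (i, h) (j, h') heq)⟩
end
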